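/- arXiv:2301.09519 — 2 statements merged into one kernel-verified Lean document; each statement's English description precedes it below -/
import Mathlib

section
/- Let A ∈ ℝ^{n×n}, B ∈ ℝ^{n×p}, C ∈ ℝ^{m×n}, let v ∈ ℝ^n be a unit vector and δ > 0 with (A, C) (δ, v)-unobservable, let u ∈ ℝ^p, and let T ≥ 0 be an integer with (T+1)δ‖u‖ ≤ 1. Let W ∈ ℝ^{n×n} be any matrix with W W^⊤ = B B^⊤ (e.g. the positive semidefinite square root of BB^⊤). Set P = P_T(A, B, C), P' = P_T(A, B + v u^⊤, C), P_w = P_T(A, W, C), and define the symmetric matrices Σ = [I; P][I, P^⊤] + [0; P_w][0, P_w^⊤] + blockdiag(0, I_{m(T+1)}) and Σ' = [I; P'][I, (P')^⊤] + [0; P_w][0, P_w^⊤] + blockdiag(0, I_{m(T+1)}), where I = I_{p(T+1)}. Then (1 − 6(T+1)‖u‖δ) Σ ⪯ Σ' ⪯ (1 + 6(T+1)‖u‖δ) Σ in the Loewner (positive semidefinite) order. -/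
/-- Euclidean norm of a real vector. -/
noncomputable def enormR {ι : Type*} [Fintype ι] (v : ι → ℝ) : ℝ :=
  Real.sqrt (∑ i, (v i) ^ 2)

/-- The block lower-triangular matrix `P_T(A, B, C) ∈ ℝ^{m(T+1) × p(T+1)}` whose `(i, j)` block
(for `0 ≤ i, j ≤ T`) equals `C A^{i−j−1} B` if `i > j` and `0` otherwise. -/
def Pmat (n p m T : ℕ) (A : Matrix (Fin n) (Fin n) ℝ) (B : Matrix (Fin n) (Fin p) ℝ)
    (C : Matrix (Fin m) (Fin n) ℝ) :
    Matrix (Fin (T + 1) × Fin m) (Fin (T + 1) × Fin p) ℝ :=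
  fun ir jc =>
    if (jc.1 : ℕ) < (ir.1 : ℕ) then (C * A ^ ((ir.1 : ℕ) - (jc.1 : ℕ) - 1) * B) ir.2 jc.2 else 0

/-- The covariance matrix `Σ = [I; P][I, Pᵀ] + [0; P_w][0, P_wᵀ] + blockdiag(0, I)` of the joint
input–observation vector of the linear dynamical system `L(A, B, C, 0)` with input covariance
`I`, observation-noise covariance `I` and process noise `W W'ᵀ`, where `P = P_T(A, B, C)` and
`P_w = P_T(A, W, C)`. -/
noncomputable def SigmaMat (n p m T : ℕ) (A : Matrix (Fin n) (Fin n) ℝ)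
    (B : Matrix (Fin n) (Fin p) ℝ) (C : Matrix (Fin m) (Fin n) ℝ)
    (W : Matrix (Fin n) (Fin n) ℝ) :
    Matrix ((Fin (T + 1) × Fin p) ⊕ (Fin (T + 1) × Fin m))
      ((Fin (T + 1) × Fin p) ⊕ (Fin (T + 1) × Fin m)) ℝ :=
  Matrix.fromBlocks 1 (Pmat n p m T A B C).transpose (Pmat n p m T A B C)
      (Pmat n p m T A B C * (Pmat n p m T A B C).transpose)
    + Matrix.fromBlocks 0 0 0 (Pmat n n m T A W C * (Pmat n n m T A W C).transpose)
    + Matrix.fromBlocks 0 0 0 1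

/-! Σ is the Gram matrix `G Gᵀ` of the map `G = covFactor` sending (inputs, process noise, observation noise)
to (inputs, observations), and replacing `B` by `B + v uᵀ` adds to `G` a matrix `F` whose only
nonzero block is `P_T(A, v uᵀ, C)`. Its blocks `C A^s v uᵀ` have Frobenius norm at most `δ‖u‖`, so
`‖Fᵀ x‖ ≤ ε ‖x_y‖ ≤ ε ‖Gᵀ x‖` with `ε = (T+1) δ ‖u‖`, the observation noise guaranteeing
`‖Gᵀ x‖ ≥ ‖x_y‖`. Hence `|‖(G + F)ᵀ x‖² − ‖Gᵀ x‖²| ≤ (2ε + ε²) ‖Gᵀ x‖² ≤ 6ε ‖Gᵀ x‖²`. -/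

open Matrix

lemma enormR_nonneg {ι : Type*} [Fintype ι] (x : ι → ℝ) : 0 ≤ enormR x :=
  Real.sqrt_nonneg _

lemma enormR_sq {ι : Type*} [Fintype ι] (x : ι → ℝ) : enormR x ^ 2 = ∑ i, x i ^ 2 :=
  Real.sq_sqrt (Finset.sum_nonneg fun i _ => sq_nonneg (x i))

section Gram

variable {k l : Type*} [Fintype k] [Fintype l]

lemma dotProduct_self_nonneg (x : l → ℝ) : 0 ≤ x ⬝ᵥ x :=
  Finset.sum_nonneg fun i _ => mul_self_nonneg (x i)

lemma dotProduct_mul_transpose_mulVec (G : Matrix k l ℝ) (x : k → ℝ) :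
    x ⬝ᵥ ((G * Gᵀ) *ᵥ x) = (Gᵀ *ᵥ x) ⬝ᵥ (Gᵀ *ᵥ x) := by
  rw [← mulVec_mulVec, dotProduct_mulVec, ← mulVec_transpose]

lemma dotProduct_self_mulVec_le (M : Matrix k l ℝ) (x : l → ℝ) :
    (M *ᵥ x) ⬝ᵥ (M *ᵥ x) ≤ (∑ i, ∑ j, M i j ^ 2) * (x ⬝ᵥ x) := by
  have hx : x ⬝ᵥ x = ∑ j, x j ^ 2 := by simp only [dotProduct, sq]
  rw [hx, Finset.sum_mul]
  refine Finset.sum_le_sum fun i _ => ?_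
  rw [← sq]
  exact Finset.sum_mul_sq_le_sq_mul_sq _ _ _

lemma posSemidef_sub_of_dotProduct_mulVec_le {S S' : Matrix k k ℝ} (hS : Sᵀ = S)
    (hS' : S'ᵀ = S') (h : ∀ x, x ⬝ᵥ (S *ᵥ x) ≤ x ⬝ᵥ (S' *ᵥ x)) : (S' - S).PosSemidef := by
  refine .of_dotProduct_mulVec_nonneg ?_ fun x => ?_
  · rw [IsHermitian, conjTranspose_eq_transpose_of_trivial, transpose_sub, hS, hS']
  · rw [star_trivial, sub_mulVec, dotProduct_sub, sub_nonneg]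
    exact h x

lemma abs_dotProduct_add_self_sub_le {a f : l → ℝ} {ε : ℝ} (hε : 0 ≤ ε)
    (hf : f ⬝ᵥ f ≤ ε ^ 2 * (a ⬝ᵥ a)) :
    |(a + f) ⬝ᵥ (a + f) - a ⬝ᵥ a| ≤ (2 * ε + ε ^ 2) * (a ⬝ᵥ a) := by
  have ha := dotProduct_self_nonneg a
  have hcs : (a ⬝ᵥ f) ^ 2 ≤ (a ⬝ᵥ a) * (f ⬝ᵥ f) := by
    simpa only [dotProduct, sq] using Finset.sum_mul_sq_le_sq_mul_sq Finset.univ a f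
  have hcross : |a ⬝ᵥ f| ≤ ε * (a ⬝ᵥ a) := by
    refine abs_le_of_sq_le_sq ?_ (by positivity)
    calc (a ⬝ᵥ f) ^ 2 ≤ (a ⬝ᵥ a) * (ε ^ 2 * (a ⬝ᵥ a)) :=
          hcs.trans (mul_le_mul_of_nonneg_left hf ha)
      _ = (ε * (a ⬝ᵥ a)) ^ 2 := by ring
  have hexpand : (a + f) ⬝ᵥ (a + f) - a ⬝ᵥ a = 2 * (a ⬝ᵥ f) + f ⬝ᵥ f := by
    simp only [add_dotProduct, dotProduct_add, dotProduct_comm f a]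
    ring
  rw [hexpand, abs_le]
  constructor <;> nlinarith [abs_le.1 hcross, dotProduct_self_nonneg f]

theorem posSemidef_mul_transpose_sandwich (M F : Matrix k l ℝ) {ε c : ℝ} (hε : 0 ≤ ε)
    (hc : 2 * ε + ε ^ 2 ≤ c)
    (hF : ∀ x, (Fᵀ *ᵥ x) ⬝ᵥ (Fᵀ *ᵥ x) ≤ ε ^ 2 * ((Mᵀ *ᵥ x) ⬝ᵥ (Mᵀ *ᵥ x))) :
    ((M + F) * (M + F)ᵀ - (1 - c) • (M * Mᵀ)).PosSemidef ∧
      ((1 + c) • (M * Mᵀ) - (M + F) * (M + F)ᵀ).PosSemidef := by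
  have hsymm (G : Matrix k l ℝ) : (G * Gᵀ)ᵀ = G * Gᵀ := by
    rw [transpose_mul, transpose_transpose]
  have hsymm_smul (a : ℝ) : (a • (M * Mᵀ))ᵀ = a • (M * Mᵀ) := by
    rw [transpose_smul, hsymm]
  have hquad (x : k → ℝ) : |x ⬝ᵥ (((M + F) * (M + F)ᵀ) *ᵥ x) - x ⬝ᵥ ((M * Mᵀ) *ᵥ x)|
      ≤ c * (x ⬝ᵥ ((M * Mᵀ) *ᵥ x)) := by
    rw [dotProduct_mul_transpose_mulVec, dotProduct_mul_transpose_mulVec, transpose_add,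
      add_mulVec]
    exact (abs_dotProduct_add_self_sub_le hε (hF x)).trans
      (mul_le_mul_of_nonneg_right hc (dotProduct_self_nonneg _))
  constructor
  · refine posSemidef_sub_of_dotProduct_mulVec_le (hsymm_smul _) (hsymm _) fun x => ?_
    rw [smul_mulVec, dotProduct_smul, smul_eq_mul]
    linarith [abs_le.1 (hquad x)]
  · refine posSemidef_sub_of_dotProduct_mulVec_le (hsymm _) (hsymm_smul _) fun x => ?_
    rw [smul_mulVec, dotProduct_smul, smul_eq_mul]
    linarith [abs_le.1 (hquad x)]

end Gram

section System

variable {n p m T : ℕ} {A : Matrix (Fin n) (Fin n) ℝ} {C : Matrix (Fin m) (Fin n) ℝ}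

lemma Pmat_add (B B' : Matrix (Fin n) (Fin p) ℝ) :
    Pmat n p m T A (B + B') C = Pmat n p m T A B C + Pmat n p m T A B' C := by
  ext ir jc
  simp only [Pmat, Matrix.add_apply]
  split_ifs <;> simp [Matrix.mul_add]

lemma sum_sq_Pmat_vecMulVec_le {v : Fin n → ℝ} {δ : ℝ}
    (hunobs : ∀ s : ℕ, enormR ((C * A ^ s) *ᵥ v) ≤ δ) (u : Fin p → ℝ) :
    ∑ ir, ∑ jc, Pmat n p m T A (vecMulVec v u) C ir jc ^ 2
      ≤ ((T + 1 : ℝ) * δ * enormR u) ^ 2 := by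
  have hblock (i j : Fin (T + 1)) :
      ∑ r, ∑ c, Pmat n p m T A (vecMulVec v u) C (i, r) (j, c) ^ 2 ≤ δ ^ 2 * enormR u ^ 2 := by
    by_cases hji : (j : ℕ) < i
    · calc ∑ r, ∑ c, Pmat n p m T A (vecMulVec v u) C (i, r) (j, c) ^ 2
          = (∑ r, ((C * A ^ ((i : ℕ) - j - 1)) *ᵥ v) r ^ 2) * ∑ c, u c ^ 2 := by
            simp only [Pmat, hji, if_true, mul_vecMulVec, vecMulVec_apply,
              mul_pow, Finset.sum_mul_sum]
        _ = enormR ((C * A ^ ((i : ℕ) - j - 1)) *ᵥ v) ^ 2 * enormR u ^ 2 := by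
            rw [enormR_sq, enormR_sq]
        _ ≤ δ ^ 2 * enormR u ^ 2 := by
            gcongr
            · exact enormR_nonneg _
            · exact hunobs _
    · simp only [Pmat, hji, if_false, ne_eq, OfNat.ofNat_ne_zero, not_false_eq_true, zero_pow,
        Finset.sum_const_zero]
      positivity
  calc ∑ ir, ∑ jc, Pmat n p m T A (vecMulVec v u) C ir jc ^ 2
      = ∑ i, ∑ j, ∑ r, ∑ c, Pmat n p m T A (vecMulVec v u) C (i, r) (j, c) ^ 2 := by
        simp only [Fintype.sum_prod_type]
        exact Finset.sum_congr rfl fun i _ => Finset.sum_comm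
    _ ≤ ∑ _i : Fin (T + 1), ∑ _j : Fin (T + 1), δ ^ 2 * enormR u ^ 2 :=
        Finset.sum_le_sum fun i _ => Finset.sum_le_sum fun j _ => hblock i j
    _ = ((T + 1 : ℝ) * δ * enormR u) ^ 2 := by
        simp only [Finset.sum_const, Finset.card_univ, Fintype.card_fin, nsmul_eq_mul]
        push_cast
        ring

end System

section Covariance

variable (n p m T : ℕ) (A : Matrix (Fin n) (Fin n) ℝ) (C : Matrix (Fin m) (Fin n) ℝ)

def covFactor (B : Matrix (Fin n) (Fin p) ℝ) (W : Matrix (Fin n) (Fin n) ℝ) :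
    Matrix ((Fin (T + 1) × Fin p) ⊕ (Fin (T + 1) × Fin m))
      ((Fin (T + 1) × Fin p) ⊕ ((Fin (T + 1) × Fin n) ⊕ (Fin (T + 1) × Fin m))) ℝ :=
  fromBlocks 1 0 (Pmat n p m T A B C) (fromCols (Pmat n n m T A W C) 1)

variable {n p m T A C}

lemma SigmaMat_eq_covFactor_mul_transpose (B : Matrix (Fin n) (Fin p) ℝ)
    (W : Matrix (Fin n) (Fin n) ℝ) :
    SigmaMat n p m T A B C W = covFactor n p m T A C B W * (covFactor n p m T A C B W)ᵀ := by
  rw [SigmaMat, covFactor, fromBlocks_transpose, fromBlocks_multiply, transpose_fromCols,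
    fromCols_mul_fromRows]
  simp [fromBlocks_add, add_assoc]

lemma covFactor_add (B B' : Matrix (Fin n) (Fin p) ℝ) (W : Matrix (Fin n) (Fin n) ℝ) :
    covFactor n p m T A C (B + B') W =
      covFactor n p m T A C B W + fromBlocks 0 0 (Pmat n p m T A B' C) 0 := by
  rw [covFactor, covFactor, Pmat_add, fromBlocks_add]
  simp

lemma dotProduct_self_inr_le_covFactor (B : Matrix (Fin n) (Fin p) ℝ)
    (W : Matrix (Fin n) (Fin n) ℝ) (x : (Fin (T + 1) × Fin p) ⊕ (Fin (T + 1) × Fin m) → ℝ) :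
    (x ∘ Sum.inr) ⬝ᵥ (x ∘ Sum.inr) ≤
      ((covFactor n p m T A C B W)ᵀ *ᵥ x) ⬝ᵥ ((covFactor n p m T A C B W)ᵀ *ᵥ x) := by
  rw [covFactor, fromBlocks_transpose, fromBlocks_mulVec, transpose_fromCols]
  simp only [transpose_one, transpose_zero, one_mulVec, zero_mulVec, zero_add, fromRows_mulVec,
    sumElim_dotProduct_sumElim]
  linarith [dotProduct_self_nonneg (x ∘ Sum.inl + (Pmat n p m T A B C)ᵀ *ᵥ (x ∘ Sum.inr)),
    dotProduct_self_nonneg ((Pmat n n m T A W C)ᵀ *ᵥ (x ∘ Sum.inr))]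

lemma dotProduct_self_perturbation_le_covFactor
    (E : Matrix (Fin (T + 1) × Fin m) (Fin (T + 1) × Fin p) ℝ) (B : Matrix (Fin n) (Fin p) ℝ)
    (W : Matrix (Fin n) (Fin n) ℝ) (x : (Fin (T + 1) × Fin p) ⊕ (Fin (T + 1) × Fin m) → ℝ) :
    let F : Matrix _ (_ ⊕ ((Fin (T + 1) × Fin n) ⊕ (Fin (T + 1) × Fin m))) ℝ := fromBlocks 0 0 E 0
    (Fᵀ *ᵥ x) ⬝ᵥ (Fᵀ *ᵥ x) ≤ (∑ i, ∑ j, E i j ^ 2) *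
      (((covFactor n p m T A C B W)ᵀ *ᵥ x) ⬝ᵥ ((covFactor n p m T A C B W)ᵀ *ᵥ x)) := by
  intro F
  have hFx : (Fᵀ *ᵥ x) ⬝ᵥ (Fᵀ *ᵥ x) = (Eᵀ *ᵥ (x ∘ Sum.inr)) ⬝ᵥ (Eᵀ *ᵥ (x ∘ Sum.inr)) := by
    simp only [F, fromBlocks_transpose, fromBlocks_mulVec, transpose_zero, zero_mulVec, zero_add,
      add_zero, sumElim_dotProduct_sumElim, dotProduct_zero]
  calc (Fᵀ *ᵥ x) ⬝ᵥ (Fᵀ *ᵥ x)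
      ≤ (∑ i, ∑ j, Eᵀ i j ^ 2) * ((x ∘ Sum.inr) ⬝ᵥ (x ∘ Sum.inr)) :=
        hFx ▸ dotProduct_self_mulVec_le _ _
    _ = (∑ i, ∑ j, E i j ^ 2) * ((x ∘ Sum.inr) ⬝ᵥ (x ∘ Sum.inr)) := by
        rw [Finset.sum_comm]
        rfl
    _ ≤ _ := mul_le_mul_of_nonneg_left (dotProduct_self_inr_le_covFactor B W x)
          (Finset.sum_nonneg fun i _ => Finset.sum_nonneg fun j _ => sq_nonneg _)

end Covariance

theorem covariance_sandwich_of_unobservable_general (n p m : ℕ)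
    (A : Matrix (Fin n) (Fin n) ℝ) (B : Matrix (Fin n) (Fin p) ℝ)
    (C : Matrix (Fin m) (Fin n) ℝ)
    (v : Fin n → ℝ) (δ : ℝ)
    (hunobs : ∀ s : ℕ, enormR ((C * A ^ s).mulVec v) ≤ δ)
    (u : Fin p → ℝ) (T : ℕ)
    (hT : (T + 1 : ℝ) * δ * enormR u ≤ 1)
    (W : Matrix (Fin n) (Fin n) ℝ) :
    (SigmaMat n p m T A (B + Matrix.vecMulVec v u) C W
        - (1 - 6 * (T + 1 : ℝ) * enormR u * δ) • SigmaMat n p m T A B C W).PosSemidef ∧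
      ((1 + 6 * (T + 1 : ℝ) * enormR u * δ) • SigmaMat n p m T A B C W
        - SigmaMat n p m T A (B + Matrix.vecMulVec v u) C W).PosSemidef := by
  have hδ : 0 ≤ δ := (enormR_nonneg _).trans (hunobs 0)
  have hε : 0 ≤ (T + 1 : ℝ) * δ * enormR u :=
    mul_nonneg (mul_nonneg (by positivity) hδ) (enormR_nonneg u)
  have hc : 2 * ((T + 1 : ℝ) * δ * enormR u) + ((T + 1 : ℝ) * δ * enormR u) ^ 2 ≤
      6 * (T + 1 : ℝ) * enormR u * δ := by
    nlinarith
  rw [SigmaMat_eq_covFactor_mul_transpose, SigmaMat_eq_covFactor_mul_transpose, covFactor_add]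
  exact posSemidef_mul_transpose_sandwich _ _ hε hc fun x =>
    (dotProduct_self_perturbation_le_covFactor _ B W x).trans <|
      mul_le_mul_of_nonneg_right (sum_sq_Pmat_vecMulVec_le hunobs u) (dotProduct_self_nonneg _)

/-- If `(A, C)` is `(δ, v)`-unobservable with `v` a unit vector, `u ∈ ℝ^p`, and
`T ≥ 0` with `(T+1) δ ‖u‖ ≤ 1`, then with `W W ᵀ = B Bᵀ`, the covariance matrices `Σ` (for the
system with input matrix `B`) and `Σ'` (for the system with input matrix `B + v uᵀ`) satisfy
`(1 − 6(T+1)‖u‖δ) Σ ⪯ Σ' ⪯ (1 + 6(T+1)‖u‖δ) Σ` in the Loewner order. -/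
theorem covariance_sandwich_of_unobservable (n p m : ℕ)
    (A : Matrix (Fin n) (Fin n) ℝ) (B : Matrix (Fin n) (Fin p) ℝ)
    (C : Matrix (Fin m) (Fin n) ℝ)
    (v : Fin n → ℝ) (δ : ℝ) (hδ : 0 < δ)
    (hv : enormR v = 1)
    (hunobs : ∀ s : ℕ, enormR ((C * A ^ s).mulVec v) ≤ δ)
    (u : Fin p → ℝ) (T : ℕ)
    (hT : (T + 1 : ℝ) * δ * enormR u ≤ 1)
    (W : Matrix (Fin n) (Fin n) ℝ) (hW : W * W.transpose = B * B.transpose) :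
    (SigmaMat n p m T A (B + Matrix.vecMulVec v u) C W
        - (1 - 6 * (T + 1 : ℝ) * enormR u * δ) • SigmaMat n p m T A B C W).PosSemidef ∧
      ((1 + 6 * (T + 1 : ℝ) * enormR u * δ) • SigmaMat n p m T A B C W
        - SigmaMat n p m T A (B + Matrix.vecMulVec v u) C W).PosSemidef :=
  covariance_sandwich_of_unobservable_general n p m A B C v δ hunobs u T hT W
end

section
/- Consider a linear dynamical system with x_0 = 0 and D = 0: x_{t+1} = A x_t + B u_t + w_t and y_t = C x_t + z_t, where the random vectors (u_t)_{t≥0}, (w_t)_{t≥0}, (z_t)_{t≥0} are mutually independent with mean zero and finite second moments, E[u_t u_t^⊤] = I_p, E[z_t z_t^⊤] = I_m, and E[w_t w_t^⊤] = Σ_w for every t. For an integer T ≥ 0, let ξ ∈ ℝ^{(p+m)(T+1)} be the vector obtained by stacking u_0, …, u_T followed by y_0, …, y_T. Then, writing P = P_T(A, B, C) and P_w = P_T(A, Σ_w^{1/2}, C), the covariance matrix satisfies E[ξ ξ^⊤] = [I; P][I, P^⊤] + [0; P_w][0, P_w^⊤] + blockdiag(0, I_{m(T+1)}), where I = I_{p(T+1)}.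 -/
open MeasureTheory ProbabilityTheory
open scoped ProbabilityTheory

/-- Embedding of `ℝ^d` into `ℕ → ℝ` (by zero padding), used to state mutual independence of
random vectors of different dimensions as independence of a single family. -/
def embedVec (d : ℕ) (v : Fin d → ℝ) : ℕ → ℝ :=
  fun i => if h : i < d then v ⟨i, h⟩ else 0

/-- The positive semidefinite square root of a positive semidefinite matrix, as defined in the
older Mathlib (`Matrix.PosSemidef.sqrt`, since removed in favour of `CFC.sqrt`). -/
noncomputable def Matrix.PosSemidef.sqrt {ι : Type*} [Fintype ι]
    [DecidableEq ι] {M : Matrix ι ι ℝ} (hM : M.PosSemidef) : Matrix ι ι ℝ :=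
  hM.1.eigenvectorUnitary * Matrix.diagonal (Real.sqrt ∘ hM.1.eigenvalues) *
    (star hM.1.eigenvectorUnitary : Matrix ι ι ℝ)

/-!
The stacked vector is a linear image `ξ = L η` of the stacked noise `η = (u, w, z)`: the inputs
are copied, and solving the state recursion gives `y = P u + P₁ w + z` with `P₁ = P_T(A, I, C)`.
Mutual independence and the moment assumptions make `E[η ηᵀ] = blockdiag(I, I ⊗ Σ_w, I)`, so
`E[ξ ξᵀ] = L E[η ηᵀ] Lᵀ`. Its `w`-part `P₁ (I ⊗ Σ_w) P₁ᵀ` is `P_w P_wᵀ`, because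
`P_w = P₁ (I ⊗ Σ_w^{1/2})` and `Σ_w^{1/2}` is symmetric with square `Σ_w`.
-/

open scoped Matrix Kronecker

def timeStack {ι : Type*} (T : ℕ) (v : ℕ → ι → ℝ) : Fin (T + 1) × ι → ℝ :=
  fun i => v i.1 i.2

lemma eq_sum_range_pow_mulVec_of_succ {R ι : Type*} [CommSemiring R] [Fintype ι]
    [DecidableEq ι] {A : Matrix ι ι R} {x v : ℕ → ι → R} (h0 : x 0 = 0)
    (hsucc : ∀ t, x (t + 1) = A *ᵥ x t + v t) (t : ℕ) :
    x t = ∑ s ∈ Finset.range t, A ^ (t - s - 1) *ᵥ v s := by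
  induction t with
  | zero => simp [h0]
  | succ t ih =>
    rw [hsucc, ih, Matrix.mulVec_sum, Finset.sum_range_succ, show t + 1 - t - 1 = 0 by omega,
      pow_zero, Matrix.one_mulVec]
    congr 1
    refine Finset.sum_congr rfl fun s hs => ?_
    rw [Matrix.mulVec_mulVec, ← pow_succ',
      show t - s - 1 + 1 = t + 1 - s - 1 by have := Finset.mem_range.mp hs; omega]

lemma Pmat_mulVec_timeStack {n p m T : ℕ} (A : Matrix (Fin n) (Fin n) ℝ)
    (B : Matrix (Fin n) (Fin p) ℝ) (C : Matrix (Fin m) (Fin n) ℝ) (v : ℕ → Fin p → ℝ)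
    (t : Fin (T + 1)) (a : Fin m) :
    (Pmat n p m T A B C *ᵥ timeStack T v) (t, a) =
      (∑ s ∈ Finset.range t, (C * A ^ (t - s - 1) * B) *ᵥ v s) a := by
  simp only [Matrix.mulVec, dotProduct, Fintype.sum_prod_type, Pmat, timeStack, ite_mul, zero_mul,
    Finset.sum_ite_irrel, Finset.sum_const_zero, Finset.sum_apply]
  rw [Fin.sum_univ_eq_sum_range (fun s => if s < (t : ℕ) then
    ∑ c, (C * A ^ ((t : ℕ) - s - 1) * B) a c * v s c else 0), ← Finset.sum_filter]
  congr 1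
  ext s
  simp only [Finset.mem_filter, Finset.mem_range]
  omega

lemma timeStack_output_eq_Pmat_mulVec {n p m : ℕ} (A : Matrix (Fin n) (Fin n) ℝ)
    (B : Matrix (Fin n) (Fin p) ℝ) (C : Matrix (Fin m) (Fin n) ℝ) {x w : ℕ → Fin n → ℝ}
    {u : ℕ → Fin p → ℝ} {y z : ℕ → Fin m → ℝ} (hx0 : x 0 = 0)
    (hx : ∀ t, x (t + 1) = A *ᵥ x t + B *ᵥ u t + w t) (hy : ∀ t, y t = C *ᵥ x t + z t)
    (T : ℕ) :
    timeStack T y = Pmat n p m T A B C *ᵥ timeStack T u + Pmat n n m T A 1 C *ᵥ timeStack T w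
      + timeStack T z := by
  ext ⟨t, a⟩
  have hxt := eq_sum_range_pow_mulVec_of_succ hx0 (fun t => (hx t).trans (add_assoc _ _ _)) t
  simp only [Pi.add_apply, Pmat_mulVec_timeStack, Finset.sum_add_distrib, timeStack, hy, hxt,
    Matrix.mulVec_sum, Matrix.mulVec_add, Matrix.mulVec_mulVec, Matrix.mul_one, Matrix.mul_assoc]

lemma Pmat_mul_one_kronecker {n p q m T : ℕ} (A : Matrix (Fin n) (Fin n) ℝ)
    (B : Matrix (Fin n) (Fin q) ℝ) (B' : Matrix (Fin q) (Fin p) ℝ)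
    (C : Matrix (Fin m) (Fin n) ℝ) :
    Pmat n q m T A B C * ((1 : Matrix (Fin (T + 1)) (Fin (T + 1)) ℝ) ⊗ₖ B') =
      Pmat n p m T A (B * B') C := by
  ext ⟨t, a⟩ ⟨s, d⟩
  rw [Matrix.mul_apply, Fintype.sum_prod_type]
  simp only [Pmat, Matrix.kroneckerMap_apply, Matrix.one_apply, ite_mul, zero_mul, one_mul,
    mul_ite, mul_zero, Finset.sum_ite_irrel, Finset.sum_const_zero, Finset.sum_ite_eq',
    Finset.mem_univ, if_true]
  rw [← Matrix.mul_assoc, Matrix.mul_apply]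

lemma Matrix.PosSemidef.sqrt_mul_transpose_sqrt {n : ℕ} {M : Matrix (Fin n) (Fin n) ℝ}
    (hM : M.PosSemidef) : hM.sqrt * hM.sqrtᵀ = M := by
  set U : Matrix (Fin n) (Fin n) ℝ := (hM.1.eigenvectorUnitary : Matrix (Fin n) (Fin n) ℝ)
  set D : Matrix (Fin n) (Fin n) ℝ := Matrix.diagonal (Real.sqrt ∘ hM.1.eigenvalues)
  have hUU : star U * U = 1 := Unitary.coe_star_mul_self _
  have hDD : D * D = Matrix.diagonal (RCLike.ofReal ∘ hM.1.eigenvalues) := by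
    rw [Matrix.diagonal_mul_diagonal]
    congr 1 with i
    simp [Real.mul_self_sqrt (hM.eigenvalues_nonneg i)]
  have hT : hM.sqrtᵀ = hM.sqrt := by
    simp only [Matrix.PosSemidef.sqrt, Matrix.transpose_mul, Matrix.diagonal_transpose,
      Matrix.star_eq_conjTranspose, Matrix.conjTranspose_eq_transpose_of_trivial,
      Matrix.transpose_transpose, Matrix.mul_assoc]
  conv_rhs => rw [hM.1.spectral_theorem, Unitary.conjStarAlgAut_apply, ← hDD]
  calc hM.sqrt * hM.sqrtᵀ = U * D * (star U * U) * D * star U := by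
        rw [hT]
        simp only [Matrix.PosSemidef.sqrt, U, D, Matrix.mul_assoc]
    _ = U * (D * D) * star U := by simp only [hUU, Matrix.mul_one, Matrix.mul_assoc]

lemma Pmat_sqrt_mul_transpose {n m T : ℕ} (A : Matrix (Fin n) (Fin n) ℝ)
    (C : Matrix (Fin m) (Fin n) ℝ) {S : Matrix (Fin n) (Fin n) ℝ} (hS : S.PosSemidef) :
    Pmat n n m T A hS.sqrt C * (Pmat n n m T A hS.sqrt C)ᵀ =
      Pmat n n m T A 1 C * ((1 : Matrix (Fin (T + 1)) (Fin (T + 1)) ℝ) ⊗ₖ S) *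
        (Pmat n n m T A 1 C)ᵀ := by
  rw [← Matrix.one_mul hS.sqrt, ← Pmat_mul_one_kronecker, Matrix.transpose_mul,
    ← Matrix.kroneckerMap_transpose, Matrix.transpose_one, Matrix.mul_assoc,
    ← Matrix.mul_assoc (1 ⊗ₖ hS.sqrt : Matrix (Fin (T + 1) × Fin n) _ ℝ),
    ← Matrix.mul_kronecker_mul, Matrix.one_mul,
    hS.sqrt_mul_transpose_sqrt, Matrix.mul_assoc]

section CrossMoment

variable {Ω ι κ ι' κ' : Type*} [MeasurableSpace Ω] (μ : Measure Ω)

noncomputable def crossMoment (X : Ω → ι → ℝ) (Y : Ω → κ → ℝ) : Matrix ι κ ℝ :=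
  Matrix.of fun i j => ∫ ω, X ω i * Y ω j ∂μ

variable {μ}

lemma crossMoment_sumElim_left (X₁ : Ω → ι → ℝ) (X₂ : Ω → ι' → ℝ) (Y : Ω → κ → ℝ) :
    crossMoment μ (fun ω => Sum.elim (X₁ ω) (X₂ ω)) Y =
      Matrix.fromRows (crossMoment μ X₁ Y) (crossMoment μ X₂ Y) := by
  ext (i | i) j <;> rfl

lemma crossMoment_sumElim_right (X : Ω → ι → ℝ) (Y₁ : Ω → κ → ℝ) (Y₂ : Ω → κ' → ℝ) :
    crossMoment μ X (fun ω => Sum.elim (Y₁ ω) (Y₂ ω)) =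
      Matrix.fromCols (crossMoment μ X Y₁) (crossMoment μ X Y₂) := by
  ext i (j | j) <;> rfl

lemma crossMoment_mulVec_mulVec [Fintype ι] [Fintype κ] {X : Ω → ι → ℝ} {Y : Ω → κ → ℝ}
    (hXY : ∀ i j, Integrable (fun ω => X ω i * Y ω j) μ) (L : Matrix ι' ι ℝ)
    (M : Matrix κ' κ ℝ) :
    crossMoment μ (fun ω => L *ᵥ X ω) (fun ω => M *ᵥ Y ω) = L * crossMoment μ X Y * Mᵀ := by
  ext i j
  have hsum : ∀ ω, (L *ᵥ X ω) i * (M *ᵥ Y ω) j =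
      ∑ k, ∑ l, L i k * M j l * (X ω k * Y ω l) := fun ω => by
    simp only [Matrix.mulVec, dotProduct, Finset.sum_mul_sum]
    exact Finset.sum_congr rfl fun k _ => Finset.sum_congr rfl fun l _ => by ring
  have hterm : ∀ k l, Integrable (fun ω => L i k * M j l * (X ω k * Y ω l)) μ := fun k l =>
    (hXY k l).const_mul _
  simp only [crossMoment, Matrix.of_apply, hsum, Matrix.mul_apply, Matrix.transpose_apply,
    Finset.sum_mul]
  rw [integral_finsetSum _ fun k _ => integrable_finsetSum _ fun l _ => hterm k l,
    Finset.sum_comm]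
  refine Finset.sum_congr rfl fun k _ => ?_
  rw [integral_finsetSum _ fun l _ => hterm k l]
  refine Finset.sum_congr rfl fun l _ => ?_
  rw [integral_const_mul]
  ring

lemma integral_mul_eq_zero_of_indepFun {f g : Ω → ℝ} (h : IndepFun f g μ)
    (hf : AEStronglyMeasurable f μ) (hg : AEStronglyMeasurable g μ) (hf0 : ∫ ω, f ω ∂μ = 0) :
    ∫ ω, f ω * g ω ∂μ = 0 := by
  rw [h.integral_fun_mul_eq_mul_integral hf hg, hf0, zero_mul]

end CrossMoment

section TimeStack

variable {Ω ι κ : Type*} [MeasurableSpace Ω] {μ : Measure Ω} {X : ℕ → Ω → ι → ℝ}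
  {Y : ℕ → Ω → κ → ℝ}

lemma crossMoment_timeStack_eq_zero (T : ℕ)
    (hXY : ∀ t s a b, IndepFun (fun ω => X t ω a) (fun ω => Y s ω b) μ)
    (hX : ∀ t a, AEStronglyMeasurable (fun ω => X t ω a) μ)
    (hY : ∀ t b, AEStronglyMeasurable (fun ω => Y t ω b) μ)
    (hX0 : ∀ t a, ∫ ω, X t ω a ∂μ = 0) :
    crossMoment μ (fun ω => timeStack T (X · ω)) (fun ω => timeStack T (Y · ω)) = 0 := by
  ext ⟨t, a⟩ ⟨s, b⟩
  exact integral_mul_eq_zero_of_indepFun (hXY t s a b) (hX t a) (hY s b) (hX0 t a)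

lemma crossMoment_timeStack_self [DecidableEq ι] (T : ℕ) (S : Matrix ι ι ℝ)
    (hXX : ∀ t s, t ≠ s → ∀ a b, IndepFun (fun ω => X t ω a) (fun ω => X s ω b) μ)
    (hX : ∀ t a, AEStronglyMeasurable (fun ω => X t ω a) μ)
    (hX0 : ∀ t a, ∫ ω, X t ω a ∂μ = 0)
    (hcov : ∀ t a b, ∫ ω, X t ω a * X t ω b ∂μ = S a b) :
    crossMoment μ (fun ω => timeStack T (X · ω)) (fun ω => timeStack T (X · ω)) = 1 ⊗ₖ S := by
  ext ⟨t, a⟩ ⟨s, b⟩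
  by_cases hts : t = s
  · subst hts
    simp [crossMoment, timeStack, hcov]
  · rw [Matrix.kroneckerMap_apply, Matrix.one_apply_ne hts, zero_mul]
    exact integral_mul_eq_zero_of_indepFun (hXX t s (Fin.val_injective.ne hts) a b) (hX t a)
      (hX s b) (hX0 t a)

end TimeStack

@[simp]
lemma embedVec_val {d : ℕ} (v : Fin d → ℝ) (a : Fin d) : embedVec d v a = v a :=
  dif_pos a.isLt

lemma ProbabilityTheory.iIndepFun.indepFun_apply {Ω κ : Type*} [MeasurableSpace Ω] {μ : Measure Ω}
    {V : κ → Ω → ℕ → ℝ} (h : iIndepFun V μ) {i j : κ} (hij : i ≠ j) (a b : ℕ) :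
    IndepFun (fun ω => V i ω a) (fun ω => V j ω b) μ :=
  (h.indepFun hij).comp (measurable_pi_apply a) (measurable_pi_apply b)

noncomputable def noiseStack {Ω ι₁ ι₂ ι₃ : Type*} (T : ℕ) (u : ℕ → Ω → ι₁ → ℝ)
    (w : ℕ → Ω → ι₂ → ℝ) (z : ℕ → Ω → ι₃ → ℝ) (ω : Ω) :
    (Fin (T + 1) × ι₁) ⊕ ((Fin (T + 1) × ι₂) ⊕ (Fin (T + 1) × ι₃)) → ℝ :=
  Sum.elim (timeStack T (u · ω)) (Sum.elim (timeStack T (w · ω)) (timeStack T (z · ω)))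

lemma crossMoment_noiseStack {Ω : Type*} [MeasureSpace Ω] {n p m : ℕ}
    {u : ℕ → Ω → Fin p → ℝ} {w : ℕ → Ω → Fin n → ℝ} {z : ℕ → Ω → Fin m → ℝ}
    {Sw : Matrix (Fin n) (Fin n) ℝ}
    (hindep : iIndepFun
      (fun idx : ℕ × Fin 3 =>
        if idx.2 = 0 then fun ω => embedVec p (u idx.1 ω)
        else if idx.2 = 1 then fun ω => embedVec n (w idx.1 ω)
        else fun ω => embedVec m (z idx.1 ω)) ℙ)
    (humean : ∀ t a, ∫ ω, u t ω a = 0) (hwmean : ∀ t a, ∫ ω, w t ω a = 0)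
    (hzmean : ∀ t a, ∫ ω, z t ω a = 0)
    (humom : ∀ t a, MemLp (fun ω => u t ω a) 2 ℙ) (hwmom : ∀ t a, MemLp (fun ω => w t ω a) 2 ℙ)
    (hzmom : ∀ t a, MemLp (fun ω => z t ω a) 2 ℙ)
    (hucov : ∀ t a b, ∫ ω, u t ω a * u t ω b = (1 : Matrix (Fin p) (Fin p) ℝ) a b)
    (hzcov : ∀ t a b, ∫ ω, z t ω a * z t ω b = (1 : Matrix (Fin m) (Fin m) ℝ) a b)
    (hwcov : ∀ t a b, ∫ ω, w t ω a * w t ω b = Sw a b) (T : ℕ) :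
    crossMoment ℙ (noiseStack T u w z) (noiseStack T u w z) =
      Matrix.fromBlocks 1 0 0 (Matrix.fromBlocks (1 ⊗ₖ Sw) 0 0 1) := by
  have hu := fun t a => (humom t a).aestronglyMeasurable
  have hw := fun t a => (hwmom t a).aestronglyMeasurable
  have hz := fun t a => (hzmom t a).aestronglyMeasurable
  have huu : ∀ t s, t ≠ s → ∀ a b, IndepFun (fun ω => u t ω a) (fun ω => u s ω b) ℙ :=
    fun t s h a b => by simpa using hindep.indepFun_apply (i := (t, 0)) (j := (s, 0)) (by simpa) a b
  have hww : ∀ t s, t ≠ s → ∀ a b, IndepFun (fun ω => w t ω a) (fun ω => w s ω b) ℙ :=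
    fun t s h a b => by simpa using hindep.indepFun_apply (i := (t, 1)) (j := (s, 1)) (by simpa) a b
  have hzz : ∀ t s, t ≠ s → ∀ a b, IndepFun (fun ω => z t ω a) (fun ω => z s ω b) ℙ :=
    fun t s h a b => by simpa using hindep.indepFun_apply (i := (t, 2)) (j := (s, 2)) (by simpa) a b
  have huw : ∀ t s a b, IndepFun (fun ω => u t ω a) (fun ω => w s ω b) ℙ :=
    fun t s a b => by simpa using hindep.indepFun_apply (i := (t, 0)) (j := (s, 1)) (by simp) a b
  have huz : ∀ t s a b, IndepFun (fun ω => u t ω a) (fun ω => z s ω b) ℙ :=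
    fun t s a b => by simpa using hindep.indepFun_apply (i := (t, 0)) (j := (s, 2)) (by simp) a b
  have hwz : ∀ t s a b, IndepFun (fun ω => w t ω a) (fun ω => z s ω b) ℙ :=
    fun t s a b => by simpa using hindep.indepFun_apply (i := (t, 1)) (j := (s, 2)) (by simp) a b
  unfold noiseStack
  simp only [crossMoment_sumElim_left, crossMoment_sumElim_right,
    crossMoment_timeStack_self T 1 huu hu humean hucov,
    crossMoment_timeStack_self T Sw hww hw hwmean hwcov,
    crossMoment_timeStack_self T 1 hzz hz hzmean hzcov,
    crossMoment_timeStack_eq_zero T huw hu hw humean,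
    crossMoment_timeStack_eq_zero T huz hu hz humean,
    crossMoment_timeStack_eq_zero T hwz hw hz hwmean,
    crossMoment_timeStack_eq_zero T (fun t s a b => (huw s t b a).symm) hw hu hwmean,
    crossMoment_timeStack_eq_zero T (fun t s a b => (huz s t b a).symm) hz hu hzmean,
    crossMoment_timeStack_eq_zero T (fun t s a b => (hwz s t b a).symm) hz hw hzmean]
  ext (i | i | i) (j | j | j) <;> simp

theorem joint_covariance_formula_general
    {Ω : Type*} [MeasureSpace Ω]
    (n p m : ℕ)
    (A : Matrix (Fin n) (Fin n) ℝ) (B : Matrix (Fin n) (Fin p) ℝ)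
    (C : Matrix (Fin m) (Fin n) ℝ)
    (Sw : Matrix (Fin n) (Fin n) ℝ) (hSw : Sw.PosSemidef)
    (x : ℕ → Ω → Fin n → ℝ) (u : ℕ → Ω → Fin p → ℝ) (w : ℕ → Ω → Fin n → ℝ)
    (z : ℕ → Ω → Fin m → ℝ) (y : ℕ → Ω → Fin m → ℝ)
    (hx0 : ∀ ω : Ω, x 0 ω = 0)
    (hx : ∀ (t : ℕ) (ω : Ω), x (t + 1) ω = A.mulVec (x t ω) + B.mulVec (u t ω) + w t ω)
    (hy : ∀ (t : ℕ) (ω : Ω), y t ω = C.mulVec (x t ω) + z t ω)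
    -- mutual independence of all the `u t`, `w t`, `z t`
    (hindep : iIndepFun
      (fun idx : ℕ × Fin 3 =>
        if idx.2 = 0 then fun ω => embedVec p (u idx.1 ω)
        else if idx.2 = 1 then fun ω => embedVec n (w idx.1 ω)
        else fun ω => embedVec m (z idx.1 ω)) ℙ)
    -- mean zero
    (humean : ∀ t a, ∫ ω, u t ω a = 0)
    (hwmean : ∀ t a, ∫ ω, w t ω a = 0)
    (hzmean : ∀ t a, ∫ ω, z t ω a = 0)
    -- finite second moments
    (humom : ∀ t a, MemLp (fun ω => u t ω a) 2 ℙ)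
    (hwmom : ∀ t a, MemLp (fun ω => w t ω a) 2 ℙ)
    (hzmom : ∀ t a, MemLp (fun ω => z t ω a) 2 ℙ)
    -- covariances
    (hucov : ∀ t (a b : Fin p), ∫ ω, u t ω a * u t ω b = if a = b then 1 else 0)
    (hzcov : ∀ t (a b : Fin m), ∫ ω, z t ω a * z t ω b = if a = b then 1 else 0)
    (hwcov : ∀ t (a b : Fin n), ∫ ω, w t ω a * w t ω b = Sw a b)
    (T : ℕ) :
    -- the stacked vector `ξ(ω) = (u_0(ω), …, u_T(ω), y_0(ω), …, y_T(ω))`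
    (Matrix.of fun i j : (Fin (T + 1) × Fin p) ⊕ (Fin (T + 1) × Fin m) =>
        ∫ ω, (Sum.elim (fun tp => u (tp.1 : ℕ) ω tp.2) (fun tm => y (tm.1 : ℕ) ω tm.2) i)
          * (Sum.elim (fun tp => u (tp.1 : ℕ) ω tp.2) (fun tm => y (tm.1 : ℕ) ω tm.2) j))
      = Matrix.fromBlocks 1 (Pmat n p m T A B C).transpose (Pmat n p m T A B C)
          (Pmat n p m T A B C * (Pmat n p m T A B C).transpose)
        + Matrix.fromBlocks 0 0 0
            (Pmat n n m T A hSw.sqrt C * (Pmat n n m T A hSw.sqrt C).transpose)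
        + Matrix.fromBlocks 0 0 0 1 := by
  have hξ : (fun ω => Sum.elim (fun tp : Fin (T + 1) × Fin p => u tp.1 ω tp.2)
      (fun tm : Fin (T + 1) × Fin m => y tm.1 ω tm.2)) =
      fun ω => Matrix.fromBlocks 1 0 (Pmat n p m T A B C) (Matrix.fromCols (Pmat n n m T A 1 C) 1)
        *ᵥ noiseStack T u w z ω := by
    funext ω
    change Sum.elim (timeStack T (u · ω)) (timeStack T (y · ω)) = _
    rw [timeStack_output_eq_Pmat_mulVec A B C (hx0 ω) (fun t => hx t ω) (fun t => hy t ω),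
      Matrix.fromBlocks_mulVec, Matrix.fromCols_mulVec]
    simp [noiseStack, add_assoc]
  have hmom : ∀ i, MemLp (fun ω => noiseStack T u w z ω i) 2 ℙ := by
    rintro (⟨t, a⟩ | ⟨t, a⟩ | ⟨t, a⟩)
    exacts [humom t a, hwmom t a, hzmom t a]
  change crossMoment ℙ _ _ = _
  rw [hξ, crossMoment_mulVec_mulVec (fun i j => (hmom i).integrable_mul (hmom j)),
    crossMoment_noiseStack hindep humean hwmean hzmean humom hwmom hzmom
      (by simpa [Matrix.one_apply] using hucov) (by simpa [Matrix.one_apply] using hzcov) hwcov,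
    Pmat_sqrt_mul_transpose]
  simp [Matrix.fromBlocks_multiply, Matrix.fromBlocks_transpose, Matrix.fromCols_mul_fromBlocks,
    Matrix.transpose_fromCols, Matrix.fromCols_mul_fromRows, Matrix.fromBlocks_add, add_assoc]

/-- (Formula for the joint input–observation covariance matrix.)  For a linear
dynamical system with `x 0 = 0` and `D = 0`, mutually independent mean-zero noise with
`E[u_t u_tᵀ] = I_p`, `E[z_t z_tᵀ] = I_m`, `E[w_t w_tᵀ] = Σ_w`, the covariance of the stacked
vector `ξ = (u_0, …, u_T, y_0, …, y_T)` equals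
`[I; P][I, Pᵀ] + [0; P_w][0, P_wᵀ] + blockdiag(0, I_{m(T+1)})`, where `P = P_T(A, B, C)` and
`P_w = P_T(A, Σ_w^{1/2}, C)` with `Σ_w^{1/2}` the positive semidefinite square root of `Σ_w`. -/
theorem joint_covariance_formula
    {Ω : Type*} [MeasureSpace Ω] [IsProbabilityMeasure (ℙ : Measure Ω)]
    (n p m : ℕ)
    (A : Matrix (Fin n) (Fin n) ℝ) (B : Matrix (Fin n) (Fin p) ℝ)
    (C : Matrix (Fin m) (Fin n) ℝ)
    (Sw : Matrix (Fin n) (Fin n) ℝ) (hSw : Sw.PosSemidef)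
    (x : ℕ → Ω → Fin n → ℝ) (u : ℕ → Ω → Fin p → ℝ) (w : ℕ → Ω → Fin n → ℝ)
    (z : ℕ → Ω → Fin m → ℝ) (y : ℕ → Ω → Fin m → ℝ)
    (hx0 : ∀ ω : Ω, x 0 ω = 0)
    (hx : ∀ (t : ℕ) (ω : Ω), x (t + 1) ω = A.mulVec (x t ω) + B.mulVec (u t ω) + w t ω)
    (hy : ∀ (t : ℕ) (ω : Ω), y t ω = C.mulVec (x t ω) + z t ω)
    (hmeasu : ∀ t, Measurable (u t)) (hmeasw : ∀ t, Measurable (w t))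
    (hmeasz : ∀ t, Measurable (z t))
    -- mutual independence of all the `u t`, `w t`, `z t`
    (hindep : iIndepFun
      (fun idx : ℕ × Fin 3 =>
        if idx.2 = 0 then fun ω => embedVec p (u idx.1 ω)
        else if idx.2 = 1 then fun ω => embedVec n (w idx.1 ω)
        else fun ω => embedVec m (z idx.1 ω)) ℙ)
    -- mean zero
    (humean : ∀ t a, ∫ ω, u t ω a = 0)
    (hwmean : ∀ t a, ∫ ω, w t ω a = 0)
    (hzmean : ∀ t a, ∫ ω, z t ω a = 0)
    -- finite second moments
    (humom : ∀ t a, MemLp (fun ω => u t ω a) 2 ℙ)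
    (hwmom : ∀ t a, MemLp (fun ω => w t ω a) 2 ℙ)
    (hzmom : ∀ t a, MemLp (fun ω => z t ω a) 2 ℙ)
    -- covariances
    (hucov : ∀ t (a b : Fin p), ∫ ω, u t ω a * u t ω b = if a = b then 1 else 0)
    (hzcov : ∀ t (a b : Fin m), ∫ ω, z t ω a * z t ω b = if a = b then 1 else 0)
    (hwcov : ∀ t (a b : Fin n), ∫ ω, w t ω a * w t ω b = Sw a b)
    (T : ℕ) :
    -- the stacked vector `ξ(ω) = (u_0(ω), …, u_T(ω), y_0(ω), …, y_T(ω))`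
    (Matrix.of fun i j : (Fin (T + 1) × Fin p) ⊕ (Fin (T + 1) × Fin m) =>
        ∫ ω, (Sum.elim (fun tp => u (tp.1 : ℕ) ω tp.2) (fun tm => y (tm.1 : ℕ) ω tm.2) i)
          * (Sum.elim (fun tp => u (tp.1 : ℕ) ω tp.2) (fun tm => y (tm.1 : ℕ) ω tm.2) j))
      = Matrix.fromBlocks 1 (Pmat n p m T A B C).transpose (Pmat n p m T A B C)
          (Pmat n p m T A B C * (Pmat n p m T A B C).transpose)
        + Matrix.fromBlocks 0 0 0
            (Pmat n n m T A hSw.sqrt C * (Pmat n n m T A hSw.sqrt C).transpose)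
        + Matrix.fromBlocks 0 0 0 1 :=
  joint_covariance_formula_general n p m A B C Sw hSw x u w z y hx0 hx hy hindep humean hwmean
    hzmean humom hwmom hzmom hucov hzcov hwcov T
end
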